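/- arXiv:1303.4348 — 4 statements merged into one kernel-verified Lean document; each statement's English description precedes it below -/
import Mathlib

section
/- For any trigonometric polynomial X of degree at most m (i.e., X(f) = Σ_{j=-m}^{m} x_j e^{i2πjf}), the derivative satisfies sup_f |X'(f)| ≤ 2πm · sup_f |X(f)|, and consequently sup_f |X''(f)| ≤ (2πm)^2 · sup_f |X(f)|. -/
/-!
M. Riesz's interpolation formula: a trigonometric polynomial `X` of degree at most `m` satisfies
`X'(f) = ∑_{k < 2m} γ_k X(f + t_k)` with nodes `t_k = (2k+1)/(4m)` and weights
`γ_k = (-1)^k π / (2m sin²(π t_k))`. The weights alternate in sign like `e^{2πi m t_k} = (-1)^k i`,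
so `∑ |γ_k|` is the value of the formula for `e^{2πimf}` at `0`, namely `2πm`, and the bound on `X'`
follows from the triangle inequality. Since `X'` again has degree at most `m`, the bound on `X''`
follows by iterating.

It suffices to check the formula on the characters `e^{2πijf}`, `|j| ≤ m`, that is,
`rieszSum m j = 2πij`. As a function of `j`, `rieszSum m` is odd, changes sign under `j ↦ j + 2m`,
and its second difference is a multiple of the alternating sum `∑_k (-1)^k e^{2πij t_k}`, which
vanishes for `0 < j < m`. Hence it is linear on `[0, m]`, and its slope is read off from the second
difference at `j = m`.
-/

open Complex Finset
open scoped Real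

theorem eq_add_mul_sub_of_sub_two_mul_add_eq_zero {R : Type*} [CommRing R] {a : ℕ → R} {N : ℕ}
    (h : ∀ n, n + 2 ≤ N → a (n + 2) - 2 * a (n + 1) + a n = 0) :
    ∀ n ≤ N, a n = a 0 + n * (a 1 - a 0) := by
  intro n
  induction n using Nat.twoStepInduction with
  | zero => simp
  | one => simp
  | more n ih₀ ih₁ =>
    intro hn
    rw [show a (n + 2) = 2 * a (n + 1) - a n by linear_combination h n hn,
      ih₀ (by omega), ih₁ (by omega)]
    push_cast
    ring

theorem exp_add_exp_neg_sub_two (x : ℝ) :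
    exp (2 * π * I * x) + exp (-(2 * π * I * x)) - 2 = -4 * (Real.sin (π * x) : ℂ) ^ 2 := by
  set u := exp (π * x * I)
  set v := exp (-(π * x) * I)
  have h₁ : exp (2 * π * I * x) = u ^ 2 := by rw [← exp_nat_mul]; push_cast; ring_nf
  have h₂ : exp (-(2 * π * I * x)) = v ^ 2 := by rw [← exp_nat_mul]; push_cast; ring_nf
  have h₃ : u * v = 1 := by rw [← exp_add]; ring_nf; exact exp_zero
  rw [ofReal_sin, sin, h₁, h₂]
  push_cast
  linear_combination 2 * h₃ + (u ^ 2 + v ^ 2 - 2 * u * v) * I_sq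

theorem hasDerivAt_sum_mul_exp {ι : Type*} (s : Finset ι) (c μ : ι → ℂ) (f : ℝ) :
    HasDerivAt (fun f : ℝ => ∑ i ∈ s, c i * exp (μ i * f))
      (∑ i ∈ s, c i * μ i * exp (μ i * f)) f :=
  HasDerivAt.fun_sum fun i _ =>
    ((((hasDerivAt_id' (f : ℂ)).const_mul (μ i)).cexp.comp_ofReal).const_mul (c i)).congr_deriv
      (by ring)

section Riesz

noncomputable def rieszNode (m k : ℕ) : ℝ := (2 * k + 1) / (4 * m)

noncomputable def rieszWeight (m k : ℕ) : ℝ :=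
  (-1) ^ k * (π / (2 * m * Real.sin (π * rieszNode m k) ^ 2))

noncomputable def rieszSum (m : ℕ) (j : ℤ) : ℂ :=
  ∑ k ∈ range (2 * m), (rieszWeight m k : ℂ) * exp (2 * π * I * j * rieszNode m k)

noncomputable def rieszAltSum (m : ℕ) (j : ℤ) : ℂ :=
  ∑ k ∈ range (2 * m), (-1) ^ k * exp (2 * π * I * j * rieszNode m k)

variable {m k : ℕ}

theorem sin_pi_mul_rieszNode_pos (hk : k < 2 * m) : 0 < Real.sin (π * rieszNode m k) := by
  have hk' : (k : ℝ) + 1 ≤ 2 * m := by exact_mod_cast hk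
  have hm : (0 : ℝ) < m := by linarith [(k.cast_nonneg : (0 : ℝ) ≤ k)]
  apply Real.sin_pos_of_pos_of_lt_pi
  · unfold rieszNode; positivity
  · rw [rieszNode, mul_div_assoc', div_lt_iff₀ (by positivity)]
    nlinarith [Real.pi_pos]

theorem exp_rieszNode_eq_pow (hm : m ≠ 0) (j : ℕ) (k : ℕ) :
    exp (2 * π * I * j * rieszNode m k) = exp (2 * π * I / (4 * m)) ^ (j * (2 * k + 1)) := by
  rw [← exp_nat_mul, rieszNode]
  congr 1
  push_cast
  field_simp

theorem exp_two_pi_I_mul_self_mul_rieszNode (hk : k < 2 * m) :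
    exp (2 * π * I * m * rieszNode m k) = (-1) ^ k * I := by
  have hm : m ≠ 0 := by omega
  have hI : exp (2 * π * I / (4 * m)) ^ m = I := by
    rw [← exp_nat_mul, show (m : ℂ) * (2 * π * I / (4 * m)) = π / 2 * I by field_simp; ring,
      exp_pi_div_two_mul_I]
  rw [exp_rieszNode_eq_pow hm, pow_mul, hI, pow_succ, pow_mul, I_sq]

theorem rieszAltSum_self : rieszAltSum m m = 2 * m * I := by
  rw [rieszAltSum, sum_congr rfl fun k hk => by
    rw [Int.cast_natCast, exp_two_pi_I_mul_self_mul_rieszNode (mem_range.mp hk), ← mul_assoc,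
      ← mul_pow, neg_one_mul, neg_neg, one_pow, one_mul]]
  simp

theorem rieszAltSum_eq_zero {j : ℕ} (hj₀ : 0 < j) (hj : j < m) : rieszAltSum m j = 0 := by
  have hm : m ≠ 0 := by omega
  have hζ := isPrimitiveRoot_exp (4 * m) (by omega)
  push_cast at hζ
  set ζ := exp (2 * π * I / (4 * m))
  have hneg : ζ ^ (2 * m) = -1 := by
    rw [← exp_nat_mul, ← exp_pi_mul_I]
    congr 1
    push_cast
    field_simp
    ring
  have hr : ζ ^ (2 * (m + j)) ≠ 1 := by
    rw [Ne, hζ.pow_eq_one_iff_dvd]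
    intro h
    have := Nat.le_of_dvd (by omega) h
    omega
  have hr' : (ζ ^ (2 * (m + j))) ^ (2 * m) = 1 := by
    rw [← pow_mul, show 2 * (m + j) * (2 * m) = 4 * m * (m + j) by ring, pow_mul, hζ.pow_eq_one,
      one_pow]
  calc rieszAltSum m j = ∑ k ∈ range (2 * m), ζ ^ j * (ζ ^ (2 * (m + j))) ^ k := by
        refine sum_congr rfl fun k _ => ?_
        rw [Int.cast_natCast, exp_rieszNode_eq_pow hm, ← hneg]
        ring
    _ = 0 := by rw [← mul_sum, geom_sum_eq hr, hr']; simp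

theorem rieszNode_reflect (hk : k < 2 * m) : rieszNode m (2 * m - 1 - k) = 1 - rieszNode m k := by
  have hm : (m : ℝ) ≠ 0 := Nat.cast_ne_zero.mpr (by omega)
  rw [rieszNode, rieszNode, Nat.sub_sub, Nat.cast_sub (by omega)]
  field_simp
  push_cast
  ring

theorem rieszWeight_reflect (hk : k < 2 * m) :
    rieszWeight m (2 * m - 1 - k) = -rieszWeight m k := by
  have hsign : (-1 : ℝ) ^ (2 * m - 1 - k) = -(-1) ^ k := by
    rcases Nat.even_or_odd k with hpar | hpar
    · rw [hpar.neg_one_pow, Odd.neg_one_pow (Nat.odd_iff.mpr (by rw [Nat.even_iff] at hpar; omega))]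
    · rw [hpar.neg_one_pow,
        Even.neg_one_pow (Nat.even_iff.mpr (by rw [Nat.odd_iff] at hpar; omega)), neg_neg]
  rw [rieszWeight, rieszWeight, rieszNode_reflect hk, mul_one_sub, Real.sin_pi_sub, hsign, neg_mul]

theorem rieszSum_second_difference (j : ℤ) :
    rieszSum m (j + 1) + rieszSum m (j - 1) - 2 * rieszSum m j =
      -(2 * π / m) * rieszAltSum m j := by
  rw [rieszSum, rieszSum, rieszSum, rieszAltSum, mul_sum, mul_sum, ← sum_add_distrib,
    ← sum_sub_distrib]
  refine sum_congr rfl fun k hk => ?_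
  have hs := (sin_pi_mul_rieszNode_pos (mem_range.mp hk)).ne'
  have hm : (m : ℝ) ≠ 0 := Nat.cast_ne_zero.mpr (by have := mem_range.mp hk; omega)
  have hw : rieszWeight m k * (-4 * Real.sin (π * rieszNode m k) ^ 2) =
      -(2 * π / m) * (-1) ^ k := by
    rw [rieszWeight]
    field_simp
    ring
  replace hw : (rieszWeight m k : ℂ) * (-4 * (Real.sin (π * rieszNode m k) : ℂ) ^ 2) =
      -(2 * π / m) * (-1) ^ k := by
    exact_mod_cast hw
  have hsum := exp_add_exp_neg_sub_two (rieszNode m k)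
  set t := rieszNode m k
  set e := exp (2 * π * I * j * t)
  have hup : exp (2 * π * I * ↑(j + 1) * t) = e * exp (2 * π * I * t) := by
    rw [← exp_add]; push_cast; ring_nf
  have hdown : exp (2 * π * I * ↑(j - 1) * t) = e * exp (-(2 * π * I * t)) := by
    rw [← exp_add]; push_cast; ring_nf
  rw [hup, hdown]
  linear_combination e * hw + (rieszWeight m k : ℂ) * e * hsum

theorem rieszSum_neg (j : ℤ) : rieszSum m (-j) = -rieszSum m j := by
  rw [rieszSum, rieszSum, ← sum_range_reflect, ← sum_neg_distrib]
  refine sum_congr rfl fun k hk => ?_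
  have hk := mem_range.mp hk
  rw [rieszWeight_reflect hk, rieszNode_reflect hk, ofReal_neg, neg_mul,
    show 2 * π * I * ↑(-j) * ↑(1 - rieszNode m k) =
        2 * π * I * j * rieszNode m k + ↑(-j) * (2 * π * I) by push_cast; ring,
    exp_add, exp_int_mul_two_pi_mul_I, mul_one]

theorem rieszSum_add_two_mul (j : ℤ) : rieszSum m (j + 2 * m) = -rieszSum m j := by
  rw [rieszSum, rieszSum, ← sum_neg_distrib]
  refine sum_congr rfl fun k hk => ?_
  have hhalf : exp (2 * π * I * ↑(2 * m : ℤ) * rieszNode m k) = -1 := by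
    rw [show 2 * π * I * ↑(2 * m : ℤ) * rieszNode m k = 2 * (2 * π * I * m * rieszNode m k) by
        push_cast; ring,
      two_mul, exp_add, exp_two_pi_I_mul_self_mul_rieszNode (mem_range.mp hk)]
    ring_nf
    rw [I_sq, (Even.neg_one_pow ⟨k, by ring⟩ : (-1 : ℂ) ^ (k * 2) = 1)]
    ring
  rw [Int.cast_add, mul_add, add_mul, exp_add, hhalf]
  ring

theorem rieszSum_natCast_eq_mul {j : ℕ} (hj : j ≤ m) : rieszSum m j = j * rieszSum m 1 := by
  have hzero : rieszSum m 0 = 0 := by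
    have := rieszSum_neg (m := m) 0
    rw [neg_zero] at this
    linear_combination this / 2
  have hlin := eq_add_mul_sub_of_sub_two_mul_add_eq_zero (a := fun n : ℕ => rieszSum m n) (N := m)
    (fun n hn => by
      have := rieszSum_second_difference (m := m) ((n + 1 : ℕ) : ℤ)
      rw [rieszAltSum_eq_zero (j := n + 1) (by omega) (by omega)] at this
      push_cast at this ⊢
      rw [show (n : ℤ) + 1 + 1 = n + 2 by ring, add_sub_cancel_right] at this
      linear_combination this)
    j hj
  simpa [hzero] using hlin

theorem rieszSum_one (hm : m ≠ 0) : rieszSum m 1 = 2 * π * I := by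
  obtain ⟨n, rfl⟩ := Nat.exists_eq_add_one_of_ne_zero hm
  have hrec := rieszSum_second_difference (m := n + 1) ((n + 1 : ℕ) : ℤ)
  have hreflect : rieszSum (n + 1) (↑(n + 1) + 1) = rieszSum (n + 1) n := by
    rw [show ((n + 1 : ℕ) : ℤ) + 1 = -n + 2 * (n + 1 : ℕ) by push_cast; ring, rieszSum_add_two_mul,
      rieszSum_neg, neg_neg]
  rw [hreflect, show ((n + 1 : ℕ) : ℤ) - 1 = n by push_cast; ring, rieszAltSum_self,
    rieszSum_natCast_eq_mul (by omega), rieszSum_natCast_eq_mul le_rfl] at hrec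
  have : ((n + 1 : ℕ) : ℂ) ≠ 0 := Nat.cast_ne_zero.mpr hm
  field_simp at hrec
  push_cast at hrec
  linear_combination -hrec / 2

theorem rieszSum_eq {j : ℤ} (hj : |j| ≤ m) : rieszSum m j = 2 * π * I * j := by
  rcases Nat.eq_zero_or_pos m with rfl | hm
  · simp [rieszSum, abs_nonpos_iff.mp (by exact_mod_cast hj)]
  obtain ⟨n, rfl | rfl⟩ := Int.eq_nat_or_neg j <;> have hn : n ≤ m := by simpa using hj
  · rw [rieszSum_natCast_eq_mul (by omega), rieszSum_one hm.ne']
    push_cast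
    ring
  · rw [rieszSum_neg, rieszSum_natCast_eq_mul (by omega), rieszSum_one hm.ne']
    push_cast
    ring

theorem neg_one_pow_mul_rieszWeight (hk : k < 2 * m) :
    (-1) ^ k * rieszWeight m k = |rieszWeight m k| := by
  have hpos : 0 < π / (2 * m * Real.sin (π * rieszNode m k) ^ 2) := by
    have := sin_pi_mul_rieszNode_pos hk
    have : (0 : ℝ) < m := by exact_mod_cast (show 0 < m by omega)
    positivity
  rw [rieszWeight, abs_mul, abs_neg_one_pow, one_mul, abs_of_pos hpos, ← mul_assoc, ← mul_pow]
  simp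

theorem sum_abs_rieszWeight (m : ℕ) : ∑ k ∈ range (2 * m), |rieszWeight m k| = 2 * π * m := by
  have h := rieszSum_eq (m := m) (j := m) (by simp)
  rw [rieszSum, sum_congr rfl fun k hk => by
    rw [Int.cast_natCast, exp_two_pi_I_mul_self_mul_rieszNode (mem_range.mp hk)]] at h
  have : ∑ k ∈ range (2 * m), (rieszWeight m k : ℂ) * ((-1) ^ k * I) =
      I * (∑ k ∈ range (2 * m), |rieszWeight m k| : ℝ) := by
    rw [ofReal_sum, mul_sum]
    refine sum_congr rfl fun k hk => ?_
    rw [← neg_one_pow_mul_rieszWeight (mem_range.mp hk)]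
    push_cast
    ring
  rw [this, Int.cast_natCast,
    show (2 : ℂ) * π * I * m = I * (2 * π * m : ℝ) by push_cast; ring] at h
  exact_mod_cast mul_left_cancel₀ I_ne_zero h

end Riesz

def IsTrigPolyOfDegreeLE (m : ℕ) (X : ℝ → ℂ) : Prop :=
  ∃ (n : ℕ) (c : Fin n → ℂ) (ν : Fin n → ℤ), (∀ i, |ν i| ≤ m) ∧
    ∀ f : ℝ, X f = ∑ i, c i * exp (2 * π * I * ν i * f)

namespace IsTrigPolyOfDegreeLE

variable {m : ℕ} {X : ℝ → ℂ}

protected theorem deriv (hX : IsTrigPolyOfDegreeLE m X) : IsTrigPolyOfDegreeLE m (deriv X) := by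
  obtain ⟨n, c, ν, hν, hX⟩ := hX
  refine ⟨n, fun i => c i * (2 * π * I * ν i), ν, hν, fun f => ?_⟩
  rw [funext hX]
  exact (hasDerivAt_sum_mul_exp _ _ _ f).deriv

theorem bddAbove_range_norm (hX : IsTrigPolyOfDegreeLE m X) :
    BddAbove (Set.range fun f => ‖X f‖) := by
  obtain ⟨n, c, ν, -, hX⟩ := hX
  refine ⟨∑ i, ‖c i‖, ?_⟩
  rintro _ ⟨f, rfl⟩
  show ‖X f‖ ≤ _
  rw [hX]
  refine (norm_sum_le _ _).trans (sum_le_sum fun i _ => ?_)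
  rw [norm_mul, show 2 * π * I * ν i * f = (2 * π * ν i * f : ℝ) * I by push_cast; ring,
    norm_exp_ofReal_mul_I, mul_one]

theorem deriv_eq_sum_rieszWeight (hX : IsTrigPolyOfDegreeLE m X) (f : ℝ) :
    deriv X f = ∑ k ∈ range (2 * m), (rieszWeight m k : ℂ) * X (f + rieszNode m k) := by
  obtain ⟨n, c, ν, hν, hX⟩ := hX
  calc deriv X f = ∑ i, c i * exp (2 * π * I * ν i * f) * rieszSum m (ν i) := by
        rw [funext hX, (hasDerivAt_sum_mul_exp _ _ _ f).deriv]
        refine sum_congr rfl fun i _ => ?_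
        rw [rieszSum_eq (hν i)]
        ring
    _ = ∑ i, ∑ k ∈ range (2 * m),
          (rieszWeight m k : ℂ) * (c i * exp (2 * π * I * ν i * ↑(f + rieszNode m k))) := by
        refine sum_congr rfl fun i _ => ?_
        rw [rieszSum, mul_sum]
        refine sum_congr rfl fun k _ => ?_
        rw [ofReal_add, mul_add, exp_add]
        ring
    _ = ∑ k ∈ range (2 * m), (rieszWeight m k : ℂ) * X (f + rieszNode m k) := by
        rw [sum_comm]
        simp_rw [hX, mul_sum]

theorem iSup_norm_deriv_le (hX : IsTrigPolyOfDegreeLE m X) :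
    (⨆ f, ‖deriv X f‖) ≤ 2 * π * m * ⨆ f, ‖X f‖ := by
  refine ciSup_le fun f => ?_
  rw [hX.deriv_eq_sum_rieszWeight f]
  calc ‖∑ k ∈ range (2 * m), (rieszWeight m k : ℂ) * X (f + rieszNode m k)‖
      ≤ ∑ k ∈ range (2 * m), ‖(rieszWeight m k : ℂ) * X (f + rieszNode m k)‖ := norm_sum_le _ _
    _ ≤ ∑ k ∈ range (2 * m), |rieszWeight m k| * ⨆ f, ‖X f‖ := by
        refine sum_le_sum fun k _ => ?_
        rw [norm_mul, norm_real, Real.norm_eq_abs]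
        gcongr
        exact le_ciSup hX.bddAbove_range_norm _
    _ = 2 * π * m * ⨆ f, ‖X f‖ := by rw [← sum_mul, sum_abs_rieszWeight]

end IsTrigPolyOfDegreeLE

/-- Bernstein's inequality for trigonometric polynomials of degree at most `m`:
`‖X'‖_∞ ≤ 2πm ‖X‖_∞` and consequently `‖X''‖_∞ ≤ (2πm)² ‖X‖_∞`. -/
theorem bernstein_trig (m : ℕ) (x : Fin (2 * m + 1) → ℂ) (X : ℝ → ℂ)
    (hX : ∀ f : ℝ, X f = ∑ j : Fin (2 * m + 1), x j *
      Complex.exp (2 * Real.pi * Complex.I * ((j : ℂ) - (m : ℂ)) * f)) :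
    (⨆ f : ℝ, ‖deriv X f‖) ≤ 2 * Real.pi * m * (⨆ f : ℝ, ‖X f‖) ∧
    (⨆ f : ℝ, ‖deriv (deriv X) f‖) ≤
      (2 * Real.pi * m) ^ 2 * (⨆ f : ℝ, ‖X f‖) := by
  have hT : IsTrigPolyOfDegreeLE m X := by
    refine ⟨2 * m + 1, x, fun j => j - m,
      fun j => abs_le.mpr ⟨by dsimp only; omega, by dsimp only; omega⟩, fun f => ?_⟩
    rw [hX]
    push_cast
    rfl
  refine ⟨hT.iSup_norm_deriv_le, hT.deriv.iSup_norm_deriv_le.trans ?_⟩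
  rw [sq, mul_assoc (2 * π * m)]
  gcongr
  exact hT.iSup_norm_deriv_le
end

section
/- Suppose Q is a continuous function on [0,1], T = {f_1,...,f_k}, N_j disjoint neighborhoods of f_j, F = [0,1] \ ∪ N_j, such that |Q(f)| ≤ 1 − (C_a/2)n^2(f−f_j)^2 on N_j and |Q(f)| ≤ 1 − C_b on F, and Q(f_j) equals the sign of the atom of ν at f_j for each j. Let ν be a finite complex measure and write P_T(ν) for its restriction to T and P_{T^c}(ν) for its restriction to the complement. If |∫_0^1 Q(f) ν(df)| ≤ B, then ‖P_{T^c}(ν)‖_TV − ‖P_T(ν)‖_TV ≥ C_a I_2 + C_b ∫_F |ν|(df) − B, where I_2 = (n²/2) Σ_j ∫_{N_j}(f−f_j)² |ν|(df). -/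
open Complex MeasureTheory

/-!
On `T` the certificate interpolates the signs, so `Q h = |h|² = 1` there and `μ T = ∫_T Q h dμ`.
Splitting `∫ Q h dμ` over `T` and `Tᶜ` gives `μ T ≤ B + ∫_{Tᶜ} |Q| dμ = B + ∫ |Q| dμ - μ T`.
Since `F` and the disjoint `N_j` cover `[0,1]`, the envelope
`|Q| ≤ 1 - C_b 𝟙_F - Σ_j 𝟙_{N_j} (C_a/2) n² (f - f_j)²` holds `μ`-a.e., and integrating it gives
`∫ |Q| dμ ≤ μ[0,1] - C_b μ F - C_a I₂`. Writing `μ[0,1] = μ T + μ([0,1] \ T)` finishes the proof.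
-/

open Set

theorem Continuous.integrable_of_measure_compl_eq_zero {X E : Type*} [TopologicalSpace X]
    [MeasurableSpace X] [OpensMeasurableSpace X] [T2Space X] [NormedAddCommGroup E]
    {μ : Measure X} [IsFiniteMeasure μ] {K : Set X} {f : X → E} (hf : Continuous f)
    (hK : IsCompact K) (hμK : μ Kᶜ = 0) : Integrable f μ := by
  rw [← Measure.restrict_eq_self_of_ae_mem (mem_ae_iff.2 hμK)]
  exact hf.continuousOn.integrableOn_compact hK

theorem two_mul_measureReal_le_of_eqOn_one {α 𝕜 : Type*} [MeasurableSpace α] [RCLike 𝕜]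
    {μ : Measure α} [IsFiniteMeasure μ] {g : α → 𝕜} (hg : Integrable g μ) {T : Set α}
    (hT : MeasurableSet T) (hg1 : EqOn g 1 T) :
    2 * μ.real T ≤ ‖∫ x, g x ∂μ‖ + ∫ x, ‖g x‖ ∂μ := by
  have hint : ∫ x in T, g x ∂μ = μ.real T := by
    rw [setIntegral_congr_fun hT hg1, Pi.one_def, setIntegral_const, RCLike.real_smul_eq_coe_mul,
      mul_one]
  have hint_norm : ∫ x in T, ‖g x‖ ∂μ = μ.real T := by
    rw [setIntegral_congr_fun hT (g := fun _ => (1 : ℝ)) fun x hx => by simp [hg1 hx],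
      setIntegral_const, smul_eq_mul, mul_one]
  calc 2 * μ.real T = ‖∫ x in T, g x ∂μ‖ + ∫ x in T, ‖g x‖ ∂μ := by
        rw [hint, hint_norm, RCLike.norm_ofReal, abs_of_nonneg measureReal_nonneg]; ring
    _ = ‖∫ x, g x ∂μ - ∫ x in Tᶜ, g x ∂μ‖ + ∫ x in T, ‖g x‖ ∂μ := by
        rw [← integral_add_compl hT hg, add_sub_cancel_right]
    _ ≤ ‖∫ x, g x ∂μ‖ + (∫ x in T, ‖g x‖ ∂μ + ∫ x in Tᶜ, ‖g x‖ ∂μ) := by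
        linarith [norm_sub_le (∫ x, g x ∂μ) (∫ x in Tᶜ, g x ∂μ),
          norm_integral_le_integral_norm (μ := μ.restrict Tᶜ) g]
    _ = ‖∫ x, g x ∂μ‖ + ∫ x, ‖g x‖ ∂μ := by rw [integral_add_compl hT hg.norm]

section Partition

variable {α ι : Type*} [Fintype ι] {S F : Set α} {N : ι → Set α} {q : α → ℝ} {c : ℝ}
  {φ : ι → α → ℝ}

theorem le_one_sub_indicator_sub_sum_indicator (hdisj : Pairwise (Function.onFun Disjoint N))
    (hF : F = S \ ⋃ j, N j) (hnear : ∀ j, ∀ x ∈ N j, q x ≤ 1 - φ j x)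
    (hfar : ∀ x ∈ F, q x ≤ 1 - c) {x : α} (hx : x ∈ S) :
    q x ≤ 1 - F.indicator (fun _ => c) x - ∑ j, (N j).indicator (φ j) x := by
  by_cases hxN : ∃ i, x ∈ N i
  · obtain ⟨i, hxi⟩ := hxN
    have hxF : x ∉ F := fun hxF => (hF ▸ hxF).2 (mem_iUnion.2 ⟨i, hxi⟩)
    have hsum : ∑ j, (N j).indicator (φ j) x = φ i x := by
      rw [Finset.sum_eq_single i (fun j _ hji => indicator_of_notMem
        (disjoint_left.1 (hdisj hji.symm) hxi) _) (by simp), indicator_of_mem hxi]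
    rw [indicator_of_notMem hxF, hsum, sub_zero]
    exact hnear i x hxi
  · have hxF : x ∈ F := hF ▸ ⟨hx, by simpa using hxN⟩
    push Not at hxN
    rw [indicator_of_mem hxF, Finset.sum_eq_zero fun j _ => indicator_of_notMem (hxN j) _,
      sub_zero]
    exact hfar x hxF

theorem integral_le_of_le_on_partition [MeasurableSpace α] {μ : Measure α} [IsFiniteMeasure μ]
    (hS : MeasurableSet S) (hμS : μ Sᶜ = 0) (hN : ∀ j, MeasurableSet (N j))
    (hdisj : Pairwise (Function.onFun Disjoint N)) (hF : F = S \ ⋃ j, N j)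
    (hq : Integrable q μ) (hφ : ∀ j, IntegrableOn (φ j) (N j) μ)
    (hnear : ∀ j, ∀ x ∈ N j, q x ≤ 1 - φ j x) (hfar : ∀ x ∈ F, q x ≤ 1 - c) :
    ∫ x, q x ∂μ ≤ μ.real univ - c * μ.real F - ∑ j, ∫ x in N j, φ j x ∂μ := by
  have hFmeas : MeasurableSet F := hF ▸ hS.diff (MeasurableSet.iUnion hN)
  have hfar_int : Integrable (fun x => 1 - F.indicator (fun _ => c) x) μ :=
    (integrable_const 1).sub ((integrable_const c).indicator hFmeas)
  have hnear_int : ∀ j, Integrable ((N j).indicator (φ j)) μ := fun j =>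
    (hφ j).integrable_indicator (hN j)
  calc ∫ x, q x ∂μ
      ≤ ∫ x, (1 - F.indicator (fun _ => c) x - ∑ j, (N j).indicator (φ j) x) ∂μ := by
        refine integral_mono_ae hq (hfar_int.sub (integrable_finsetSum _ fun j _ => hnear_int j)) ?_
        filter_upwards [mem_ae_iff.2 hμS] with x hx
        exact le_one_sub_indicator_sub_sum_indicator hdisj hF hnear hfar hx
    _ = μ.real univ - c * μ.real F - ∑ j, ∫ x in N j, φ j x ∂μ := by
        rw [integral_sub hfar_int (integrable_finsetSum _ fun j _ => hnear_int j),
          integral_sub (integrable_const 1) ((integrable_const c).indicator hFmeas),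
          integral_finsetSum _ fun j _ => hnear_int j, integral_const,
          integral_indicator_const _ hFmeas]
        simp [integral_indicator (hN _), mul_comm]

end Partition

theorem dual_certificate_lower_bound_general (n k : ℕ)
    (μ : Measure ℝ) [IsFiniteMeasure μ] (h : ℝ → ℂ) (hmeas : Measurable h)
    (hunit : ∀ f, ‖h f‖ = 1) (hsupp : μ (Set.Icc (0 : ℝ) 1)ᶜ = 0)
    (fj : Fin k → ℝ) (N : Fin k → Set ℝ) (hNmeas : ∀ j, MeasurableSet (N j))
    (hdisj : Pairwise (Function.onFun Disjoint N))
    (T F : Set ℝ) (hT : T = Set.range fj) (hF : F = Set.Icc (0 : ℝ) 1 \ ⋃ j, N j)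
    (Ca Cb B : ℝ)
    (Q : ℝ → ℂ) (hQcont : Continuous Q)
    (hQsign : ∀ j, Q (fj j) = (starRingEnd ℂ) (h (fj j)))
    (hQnear : ∀ j, ∀ f ∈ N j, ‖Q f‖ ≤ 1 - Ca / 2 * n ^ 2 * (f - fj j) ^ 2)
    (hQfar : ∀ f ∈ F, ‖Q f‖ ≤ 1 - Cb)
    (hB : ‖∫ f, Q f * h f ∂μ‖ ≤ B)
    (I2 : ℝ) (hI2 : I2 = (n : ℝ) ^ 2 / 2 * ∑ j, ∫ f in N j, (f - fj j) ^ 2 ∂μ) :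
    (μ (Set.Icc (0 : ℝ) 1 \ T)).toReal - (μ T).toReal ≥
      Ca * I2 + Cb * (μ F).toReal - B := by
  subst hT
  have hQint : Integrable Q μ := hQcont.integrable_of_measure_compl_eq_zero isCompact_Icc hsupp
  have hQh_one : EqOn (fun f => Q f * h f) 1 (range fj) := by
    rintro _ ⟨j, rfl⟩
    change Q (fj j) * h (fj j) = 1
    rw [hQsign j, mul_comm, mul_conj', hunit, ofReal_one, one_pow]
  have hTmeas : MeasurableSet (range fj) := (finite_range fj).measurableSet
  have hcert := two_mul_measureReal_le_of_eqOn_one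
    (hQint.mul_bdd hmeas.aestronglyMeasurable (.of_forall fun f => (hunit f).le)) hTmeas hQh_one
  simp only [norm_mul, hunit, mul_one] at hcert
  have henv := integral_le_of_le_on_partition measurableSet_Icc hsupp hNmeas hdisj hF hQint.norm
    (fun j => ((by fun_prop : Continuous fun f : ℝ => Ca / 2 * n ^ 2 * (f - fj j) ^ 2)
      |>.integrable_of_measure_compl_eq_zero isCompact_Icc hsupp).integrableOn) hQnear hQfar
  have hCaI2 : Ca * I2 = ∑ j, ∫ f in N j, Ca / 2 * n ^ 2 * (f - fj j) ^ 2 ∂μ := by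
    simp_rw [hI2, integral_const_mul, ← Finset.mul_sum]; ring
  have hsplit : μ.real univ = μ.real (range fj) + μ.real (Icc 0 1 \ range fj) := by
    rw [← measureReal_add_measureReal_compl hTmeas, sdiff_eq_compl_inter]
    simp only [Measure.real, measure_inter_conull hsupp]
  simp only [← measureReal_def]
  linarith

/-- Lower bound on `‖P_{T^c}(ν)‖_TV − ‖P_T(ν)‖_TV` from a dual certificate: if `Q`
interpolates the signs of `ν` on `T`, decays quadratically on each `N_j` and has a gap on
`F`, and `|∫ Q dν| ≤ B`, then
`‖P_{T^c}(ν)‖_TV − ‖P_T(ν)‖_TV ≥ C_a I₂ + C_b |ν|(F) − B`.  The finite complex measure `ν`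
is written in polar form `ν(df) = h(f) μ(df)` with `μ = |ν|` and `|h| = 1`. -/
theorem dual_certificate_lower_bound (n k : ℕ) (hn : 0 < n)
    (μ : Measure ℝ) [IsFiniteMeasure μ] (h : ℝ → ℂ) (hmeas : Measurable h)
    (hunit : ∀ f, ‖h f‖ = 1) (hsupp : μ (Set.Icc (0 : ℝ) 1)ᶜ = 0)
    (fj : Fin k → ℝ) (N : Fin k → Set ℝ) (hNmeas : ∀ j, MeasurableSet (N j))
    (hmem : ∀ j, fj j ∈ N j) (hsub : ∀ j, N j ⊆ Set.Icc (0 : ℝ) 1)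
    (hdisj : Pairwise (Function.onFun Disjoint N))
    (T F : Set ℝ) (hT : T = Set.range fj) (hF : F = Set.Icc (0 : ℝ) 1 \ ⋃ j, N j)
    (Ca Cb B : ℝ) (hCa : 0 < Ca) (hCb : 0 < Cb)
    (Q : ℝ → ℂ) (hQcont : Continuous Q)
    (hQsign : ∀ j, Q (fj j) = (starRingEnd ℂ) (h (fj j)))
    (hQnear : ∀ j, ∀ f ∈ N j, ‖Q f‖ ≤ 1 - Ca / 2 * n ^ 2 * (f - fj j) ^ 2)
    (hQfar : ∀ f ∈ F, ‖Q f‖ ≤ 1 - Cb)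
    (hB : ‖∫ f, Q f * h f ∂μ‖ ≤ B)
    (I2 : ℝ) (hI2 : I2 = (n : ℝ) ^ 2 / 2 * ∑ j, ∫ f in N j, (f - fj j) ^ 2 ∂μ) :
    (μ (Set.Icc (0 : ℝ) 1 \ T)).toReal - (μ T).toReal ≥
      Ca * I2 + Cb * (μ F).toReal - B :=
  dual_certificate_lower_bound_general n k μ h hmeas hunit hsupp fj N hNmeas hdisj T F hT hF Ca Cb B
    Q hQcont hQsign hQnear hQfar hB I2 hI2
end

section
/- Let ν be a finite complex measure on [0,1] and suppose there exists a continuous Q_j⋆ with Q_j⋆(f_j) = 1, |1 − Q_j⋆(f)| ≤ C_1' n²(f−f_j)² on N_j, |Q_j⋆(f)| ≤ C_1' n²(f−f_{j'})² on N_{j'} for j' ≠ j, and |Q_j⋆(f)| ≤ C_2' on F. If |∫_0^1 Q_j⋆(f) ν(df)| ≤ B_1, ∫_F |ν|(df) ≤ B_2, and I_2 := (n²/2) Σ_{j'} ∫_{N_{j'}} (f−f_{j'})² |ν|(df) ≤ B_3, then |∫_{N_j} ν(df)| ≤ B_1 + C_2' B_2 + 2C_1' B_3. -/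
open Complex MeasureTheory

/-!
Write `∫_{N_j} ν - ∫ Q_j⋆ ν = ∫ (𝟙_{N_j} - Q_j⋆) dν`. Since `ν` lives on `[0,1] = F ∪ ⋃ N_{j'}`
and the regions are disjoint, the integrand is dominated pointwise by `C₂'` on `F` and by
`C₁' n² (f - f_{j'})²` on `N_{j'}` (on `N_j` through `|1 - Q_j⋆|`, elsewhere through `|Q_j⋆|`).
Integrating this weight against `|ν|` gives `C₂' |ν|(F) + 2 C₁' I₂`.
-/

section Pointwise

variable {X ι E : Type*} [Fintype ι] [SeminormedAddGroup E] [One E]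
  {N : ι → Set X} {F : Set X} {Q : X → E} {b : ι → X → ℝ} {c : ℝ} {j : ι}

theorem sum_indicator_eq_of_mem (hdisj : Pairwise (Function.onFun Disjoint N)) {i : ι} {x : X}
    (hx : x ∈ N i) : ∑ i', (N i').indicator (b i') x = b i x := by
  rw [Finset.sum_eq_single i (fun i' _ hi' => Set.indicator_of_notMem
    ((hdisj hi').symm.notMem_of_mem_left hx) _) (by simp), Set.indicator_of_mem hx]

theorem norm_indicator_one_sub_le (hdisj : Pairwise (Function.onFun Disjoint N))
    (hFN : Disjoint F (⋃ i, N i))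
    (hnear : ∀ x ∈ N j, ‖1 - Q x‖ ≤ b j x)
    (hother : ∀ i, i ≠ j → ∀ x ∈ N i, ‖Q x‖ ≤ b i x)
    (hfar : ∀ x ∈ F, ‖Q x‖ ≤ c) {x : X} (hx : x ∈ F ∪ ⋃ i, N i) :
    ‖(N j).indicator 1 x - Q x‖ ≤ F.indicator (fun _ => c) x + ∑ i, (N i).indicator (b i) x := by
  rcases hx with hxF | hxN
  · have hxN : ∀ i, x ∉ N i := fun i hxi => hFN.notMem_of_mem_left hxF (Set.mem_iUnion.2 ⟨i, hxi⟩)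
    simpa [Set.indicator_of_mem hxF, hxN] using hfar x hxF
  · obtain ⟨i, hxi⟩ := Set.mem_iUnion.1 hxN
    have hxF : x ∉ F := fun hxF => hFN.notMem_of_mem_left hxF hxN
    rw [Set.indicator_of_notMem hxF, zero_add, sum_indicator_eq_of_mem hdisj hxi]
    by_cases hij : i = j
    · subst hij
      simpa [Set.indicator_of_mem hxi] using hnear x hxi
    · have hxj : x ∉ N j := (hdisj hij).notMem_of_mem_left hxi
      simpa [Set.indicator_of_notMem hxj] using hother i hij x hxi

end Pointwise

theorem norm_setIntegral_sub_integral_mul_le {X ι 𝕜 : Type*} [MeasurableSpace X] [Fintype ι]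
    [RCLike 𝕜] {μ : Measure X} [IsFiniteMeasure μ] {N : ι → Set X} {F : Set X}
    (hNm : ∀ i, MeasurableSet (N i)) (hFm : MeasurableSet F)
    (hdisj : Pairwise (Function.onFun Disjoint N)) (hFN : Disjoint F (⋃ i, N i))
    (hcover : ∀ᵐ x ∂μ, x ∈ F ∪ ⋃ i, N i) {Q h : X → 𝕜} (hQ : AEStronglyMeasurable Q μ)
    (hh : AEStronglyMeasurable h μ) (hh1 : ∀ x, ‖h x‖ ≤ 1) {b : ι → X → ℝ}
    (hb : ∀ i, IntegrableOn (b i) (N i) μ) {c : ℝ} {j : ι}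
    (hnear : ∀ x ∈ N j, ‖1 - Q x‖ ≤ b j x)
    (hother : ∀ i, i ≠ j → ∀ x ∈ N i, ‖Q x‖ ≤ b i x)
    (hfar : ∀ x ∈ F, ‖Q x‖ ≤ c) :
    ‖∫ x in N j, h x ∂μ - ∫ x, Q x * h x ∂μ‖ ≤ c * μ.real F + ∑ i, ∫ x in N i, b i x ∂μ := by
  set w : X → ℝ := fun x => F.indicator (fun _ => c) x + ∑ i, (N i).indicator (b i) x
  have hFint : Integrable (F.indicator fun _ => c) μ := (integrable_const c).indicator hFm
  have hNint : ∀ i ∈ Finset.univ, Integrable ((N i).indicator (b i)) μ :=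
    fun i _ => (hb i).integrable_indicator (hNm i)
  have hw : Integrable w μ := hFint.add (integrable_finsetSum _ hNint)
  have hbound : ∀ᵐ x ∂μ, ‖((N j).indicator 1 x - Q x) * h x‖ ≤ w x := by
    filter_upwards [hcover] with x hx
    calc ‖((N j).indicator 1 x - Q x) * h x‖ ≤ ‖(N j).indicator 1 x - Q x‖ * 1 := by
          rw [norm_mul]; gcongr; exact hh1 x
      _ ≤ w x := by
          rw [mul_one]; exact norm_indicator_one_sub_le hdisj hFN hnear hother hfar hx
  have hdiff : Integrable (fun x => ((N j).indicator 1 x - Q x) * h x) μ :=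
    hw.mono' (((aestronglyMeasurable_const.indicator (hNm j)).sub hQ).mul hh) hbound
  have hind : Integrable ((N j).indicator h) μ :=
    ((integrable_const (1 : ℝ)).mono' hh (.of_forall hh1)).indicator (hNm j)
  have hpt : ∀ x, ((N j).indicator 1 x - Q x) * h x = (N j).indicator h x - Q x * h x := by
    intro x
    by_cases hx : x ∈ N j <;> simp [hx, sub_mul]
  have hQh : Integrable (fun x => Q x * h x) μ :=
    (hind.sub hdiff).congr (.of_forall fun x => by simp [hpt])
  calc ‖∫ x in N j, h x ∂μ - ∫ x, Q x * h x ∂μ‖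
      = ‖∫ x, ((N j).indicator 1 x - Q x) * h x ∂μ‖ := by
        rw [← integral_indicator (hNm j), ← integral_sub hind hQh]
        simp_rw [hpt]
    _ ≤ ∫ x, w x ∂μ := norm_integral_le_of_norm_le hw hbound
    _ = c * μ.real F + ∑ i, ∫ x in N i, b i x ∂μ := by
        rw [integral_add hFint (integrable_finsetSum _ hNint), integral_indicator hFm,
          setIntegral_const, integral_finsetSum _ hNint, smul_eq_mul, mul_comm]
        simp_rw [integral_indicator (hNm _)]

theorem amplitude_approx_bound_general (n k : ℕ)
    (μ : Measure ℝ) [IsFiniteMeasure μ] (h : ℝ → ℂ) (hmeas : Measurable h)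
    (hunit : ∀ f, ‖h f‖ = 1) (hsupp : μ (Set.Icc (0 : ℝ) 1)ᶜ = 0)
    (fj : Fin k → ℝ) (N : Fin k → Set ℝ) (hNmeas : ∀ j', MeasurableSet (N j'))
    (hsub : ∀ j', N j' ⊆ Set.Icc (0 : ℝ) 1)
    (hdisj : Pairwise (Function.onFun Disjoint N))
    (F : Set ℝ) (hF : F = Set.Icc (0 : ℝ) 1 \ ⋃ j', N j')
    (j : Fin k) (C1' C2' B1 B2 B3 : ℝ) (hC1' : 0 ≤ C1') (hC2' : 0 ≤ C2')
    (Q : ℝ → ℂ) (hQcont : Continuous Q)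
    (hQnear : ∀ f ∈ N j, ‖1 - Q f‖ ≤ C1' * n ^ 2 * (f - fj j) ^ 2)
    (hQother : ∀ j', j' ≠ j → ∀ f ∈ N j', ‖Q f‖ ≤ C1' * n ^ 2 * (f - fj j') ^ 2)
    (hQfar : ∀ f ∈ F, ‖Q f‖ ≤ C2')
    (hB1 : ‖∫ f, Q f * h f ∂μ‖ ≤ B1)
    (hB2 : (μ F).toReal ≤ B2)
    (hB3 : (n : ℝ) ^ 2 / 2 * ∑ j', ∫ f in N j', (f - fj j') ^ 2 ∂μ ≤ B3) :
    ‖∫ f in N j, h f ∂μ‖ ≤ B1 + C2' * B2 + 2 * C1' * B3 := by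
  have hcover : ∀ᵐ f ∂μ, f ∈ F ∪ ⋃ j', N j' := by
    filter_upwards [mem_ae_iff.2 hsupp] with f hf
    rw [hF, Set.sdiff_union_self]
    exact Or.inl hf
  have hdiff := norm_setIntegral_sub_integral_mul_le hNmeas
    (hF ▸ measurableSet_Icc.diff (MeasurableSet.iUnion hNmeas)) hdisj
    (hF ▸ Set.disjoint_sdiff_left) hcover hQcont.aestronglyMeasurable
    hmeas.aestronglyMeasurable (fun f => (hunit f).le)
    (fun i => (by fun_prop : Continuous fun f : ℝ => C1' * n ^ 2 * (f - fj i) ^ 2)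
      |>.integrableOn_Icc.mono_set (hsub i)) hQnear hQother hQfar
  have hweight : ∑ i, ∫ f in N i, C1' * n ^ 2 * (f - fj i) ^ 2 ∂μ
      = 2 * C1' * ((n : ℝ) ^ 2 / 2 * ∑ i, ∫ f in N i, (f - fj i) ^ 2 ∂μ) := by
    simp_rw [integral_const_mul, ← Finset.mul_sum]
    ring
  calc ‖∫ f in N j, h f ∂μ‖
      ≤ ‖∫ f, Q f * h f ∂μ‖ + ‖∫ f in N j, h f ∂μ - ∫ f, Q f * h f ∂μ‖ := norm_le_insert' _ _
    _ ≤ B1 + (C2' * B2 + 2 * C1' * B3) := by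
        refine add_le_add hB1 (hdiff.trans ?_)
        rw [hweight, measureReal_def]
        gcongr
    _ = B1 + C2' * B2 + 2 * C1' * B3 := by ring

/-- Deterministic core of the amplitude-approximation claim (Theorem 2(iii)): given a dual
polynomial `Q_j⋆` with `Q_j⋆(f_j) = 1`, quadratic deviation on each near region and bounded
on the far region, if `|∫ Q_j⋆ dν| ≤ B₁`, `|ν|(F) ≤ B₂` and `I₂ ≤ B₃`, then
`|∫_{N_j} dν| ≤ B₁ + C₂' B₂ + 2 C₁' B₃`.  The finite complex measure `ν` is written in polar
form `ν(df) = h(f) μ(df)` with `μ = |ν|` and `|h| = 1`. -/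
theorem amplitude_approx_bound (n k : ℕ) (hn : 0 < n)
    (μ : Measure ℝ) [IsFiniteMeasure μ] (h : ℝ → ℂ) (hmeas : Measurable h)
    (hunit : ∀ f, ‖h f‖ = 1) (hsupp : μ (Set.Icc (0 : ℝ) 1)ᶜ = 0)
    (fj : Fin k → ℝ) (N : Fin k → Set ℝ) (hNmeas : ∀ j', MeasurableSet (N j'))
    (hmem : ∀ j', fj j' ∈ N j') (hsub : ∀ j', N j' ⊆ Set.Icc (0 : ℝ) 1)
    (hdisj : Pairwise (Function.onFun Disjoint N))
    (F : Set ℝ) (hF : F = Set.Icc (0 : ℝ) 1 \ ⋃ j', N j')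
    (j : Fin k) (C1' C2' B1 B2 B3 : ℝ) (hC1' : 0 ≤ C1') (hC2' : 0 ≤ C2')
    (Q : ℝ → ℂ) (hQcont : Continuous Q) (hQ1 : Q (fj j) = 1)
    (hQnear : ∀ f ∈ N j, ‖1 - Q f‖ ≤ C1' * n ^ 2 * (f - fj j) ^ 2)
    (hQother : ∀ j', j' ≠ j → ∀ f ∈ N j', ‖Q f‖ ≤ C1' * n ^ 2 * (f - fj j') ^ 2)
    (hQfar : ∀ f ∈ F, ‖Q f‖ ≤ C2')
    (hB1 : ‖∫ f, Q f * h f ∂μ‖ ≤ B1)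
    (hB2 : (μ F).toReal ≤ B2)
    (hB3 : (n : ℝ) ^ 2 / 2 * ∑ j', ∫ f in N j', (f - fj j') ^ 2 ∂μ ≤ B3) :
    ‖∫ f in N j, h f ∂μ‖ ≤ B1 + C2' * B2 + 2 * C1' * B3 :=
  amplitude_approx_bound_general n k μ h hmeas hunit hsupp fj N hNmeas hsub hdisj F hF j C1' C2' B1
    B2 B3 hC1' hC2' Q hQcont hQnear hQother hQfar hB1 hB2 hB3
end

section
/- Suppose for the true frequency f_j with amplitude c_j the recovered measure satisfies: (i) Σ_{l: f̂_l ∈ N_j} |ĉ_l| d(f_j, f̂_l)² ≤ C_2 ε / n² and (ii) |c_j − Σ_{l: f̂_l ∈ N_j} ĉ_l| ≤ C_1 ε, where ε > 0. If |c_j| > C_1 ε, then there exists l with f̂_l ∈ N_j and d(f_j, f̂_l) ≤ (1/n)·√(C_2/C_1)·(|c_j|/(C_1 ε) − 1)^{-1/2}. -/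
/-!
If every recovered frequency were farther than `δ` from `f_j`, the weighted sum
`Σ |ĉ_l| d(f_j, f̂_l)²` would exceed `δ² Σ |ĉ_l| ≥ δ² (|c_j| - C₁ε)`, and `δ` is chosen exactly so
that this equals `C₂ε/n²`. So the squared distances, averaged with weights `|ĉ_l|`, are at most
`δ²`, and some single one is.
-/

theorem Finset.exists_le_of_sum_mul_le_mul_sum {ι K : Type*} [Semiring K] [LinearOrder K]
    [IsStrictOrderedRing K] {s : Finset ι} {w x : ι → K} {c : K} (hw : ∀ i ∈ s, 0 ≤ w i)
    (hpos : 0 < ∑ i ∈ s, w i) (h : ∑ i ∈ s, w i * x i ≤ (∑ i ∈ s, w i) * c) :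
    ∃ i ∈ s, x i ≤ c := by
  by_contra! hlt
  obtain ⟨i, hi, hwi⟩ := Finset.exists_lt_of_sum_lt (f := fun _ ↦ (0 : K)) (by simpa using hpos)
  have : ∑ i ∈ s, w i * c < ∑ i ∈ s, w i * x i :=
    Finset.sum_lt_sum (fun j hj ↦ mul_le_mul_of_nonneg_left (hlt j hj).le (hw j hj))
      ⟨i, hi, mul_lt_mul_of_pos_left (hlt i hi) hwi⟩
  rw [← Finset.sum_mul] at this
  exact this.not_ge h

theorem norm_sub_le_sum_norm_of_norm_sub_sum_le {ι E : Type*} [SeminormedAddCommGroup E]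
    (s : Finset ι) (f : ι → E) {a : E} {r : ℝ} (h : ‖a - ∑ i ∈ s, f i‖ ≤ r) :
    ‖a‖ - r ≤ ∑ i ∈ s, ‖f i‖ := by
  have := norm_sub_norm_le a (∑ i ∈ s, f i)
  have := norm_sum_le s f
  linarith

theorem sq_sqrt_div_mul_sqrt_mul {a m t : ℝ} (ha : 0 ≤ a) (ht : 0 < t) :
    (Real.sqrt a / (m * Real.sqrt t)) ^ 2 * t = a / m ^ 2 := by
  rw [div_pow, mul_pow, Real.sq_sqrt ha, Real.sq_sqrt ht.le, ← div_div,
    div_mul_cancel₀ _ ht.ne']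

theorem frequency_localization_general (n : ℕ) (C1 C2 ε : ℝ)
    (hC1 : 0 < C1) (hC2 : 0 < C2) (hε : 0 < ε)
    (L : Type*) [Fintype L] (chat : L → ℂ) (fhat : L → ℝ) (fj : ℝ) (cj : ℂ)
    (d : ℝ → ℝ → ℝ)
    (h1 : ∑ l, ‖chat l‖ * (d fj (fhat l)) ^ 2 ≤ C2 * ε / n ^ 2)
    (h2 : ‖cj - ∑ l, chat l‖ ≤ C1 * ε)
    (h3 : C1 * ε < ‖cj‖) :
    ∃ l : L, d fj (fhat l) ≤
      Real.sqrt (C2 / C1) / ((n : ℝ) * Real.sqrt (‖cj‖ / (C1 * ε) - 1)) := by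
  set δ := Real.sqrt (C2 / C1) / ((n : ℝ) * Real.sqrt (‖cj‖ / (C1 * ε) - 1))
  have hC1ε : 0 < C1 * ε := mul_pos hC1 hε
  have ht : 0 < ‖cj‖ / (C1 * ε) - 1 := by rwa [sub_pos, one_lt_div hC1ε]
  have hmass := norm_sub_le_sum_norm_of_norm_sub_sum_le Finset.univ chat h2
  have hδ : (‖cj‖ - C1 * ε) * δ ^ 2 = C2 * ε / n ^ 2 := by
    rw [show ‖cj‖ - C1 * ε = (‖cj‖ / (C1 * ε) - 1) * (C1 * ε) by field_simp,
      mul_comm, ← mul_assoc, sq_sqrt_div_mul_sqrt_mul (div_nonneg hC2.le hC1.le) ht]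
    field_simp
  have hbound : ∑ l, ‖chat l‖ * d fj (fhat l) ^ 2 ≤ (∑ l, ‖chat l‖) * δ ^ 2 :=
    h1.trans (hδ ▸ mul_le_mul_of_nonneg_right hmass (sq_nonneg δ))
  obtain ⟨l, -, hl⟩ := Finset.exists_le_of_sum_mul_le_mul_sum (fun l _ ↦ norm_nonneg (chat l))
    (by linarith) hbound
  exact ⟨l, (abs_le_of_sq_le_sq' hl (by positivity)).2⟩

/-- Part (iv) of the localization theorem from parts (ii) and (iii): if
`Σ_l |ĉ_l| d(f_j, f̂_l)² ≤ C₂ ε/n²` and `|c_j − Σ_l ĉ_l| ≤ C₁ ε` with `|c_j| > C₁ ε`, then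
some recovered frequency `f̂_l` satisfies
`d(f_j, f̂_l) ≤ (1/n) √(C₂/C₁) (|c_j|/(C₁ε) − 1)^{-1/2}`.  Here `d` is the wrap-around
distance on the torus. -/
theorem frequency_localization (n : ℕ) (hn : 0 < n) (C1 C2 ε : ℝ)
    (hC1 : 0 < C1) (hC2 : 0 < C2) (hε : 0 < ε)
    (L : Type*) [Fintype L] (chat : L → ℂ) (fhat : L → ℝ) (fj : ℝ) (cj : ℂ)
    (d : ℝ → ℝ → ℝ) (hd : ∀ a b, d a b = min |a - b| (1 - |a - b|))
    (hd0 : ∀ l, 0 ≤ d fj (fhat l))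
    (h1 : ∑ l, ‖chat l‖ * (d fj (fhat l)) ^ 2 ≤ C2 * ε / n ^ 2)
    (h2 : ‖cj - ∑ l, chat l‖ ≤ C1 * ε)
    (h3 : C1 * ε < ‖cj‖) :
    ∃ l : L, d fj (fhat l) ≤
      Real.sqrt (C2 / C1) / ((n : ℝ) * Real.sqrt (‖cj‖ / (C1 * ε) - 1)) :=
  frequency_localization_general n C1 C2 ε hC1 hC2 hε L chat fhat fj cj d h1 h2 h3
end
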